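/- (Sandwich property of tiles.) Let X ⊆ S ⊆ P ⊆ U be finite sets and let f ⊆ U. If f is a tile of QT(X) and f is a tile of QT(P), then f is a tile of QT(S). -/

import Mathlib

/-- The unit square `U = [0,1) × [0,1)`. -/
def unitSq : Set (ℝ × ℝ) := Set.Ico (0 : ℝ) 1 ×ˢ Set.Ico (0 : ℝ) 1

/-- The square `[i/2^k, (i+1)/2^k) × [j/2^k, (j+1)/2^k)`. -/
def canSq (k : ℕ) (i j : ℤ) : Set (ℝ × ℝ) :=
  Set.Ico ((i : ℝ) / 2 ^ k) (((i : ℝ) + 1) / 2 ^ k) ×ˢ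
    Set.Ico ((j : ℝ) / 2 ^ k) (((j : ℝ) + 1) / 2 ^ k)

/-- `σ` is a canonical square of side length `2⁻ᵏ`: it has the form
`[i/2^k, (i+1)/2^k) × [j/2^k, (j+1)/2^k)` with `0 ≤ i, j < 2^k`
(so it is contained in the unit square). -/
def IsCanSqSide (k : ℕ) (σ : Set (ℝ × ℝ)) : Prop :=
  ∃ i j : ℤ, 0 ≤ i ∧ i < 2 ^ k ∧ 0 ≤ j ∧ j < 2 ^ k ∧ σ = canSq k i j

/-- `σ` is a canonical square. -/
def IsCanSq (σ : Set (ℝ × ℝ)) : Prop := ∃ k : ℕ, IsCanSqSide k σ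

/-- `q` is one of the four quadrants of the canonical square `σ`: if `σ` has side
length `2⁻ᵏ`, the quadrants are the canonical squares of side length `2⁻⁽ᵏ⁺¹⁾`
contained in `σ`. -/
def IsQuadrantOf (q σ : Set (ℝ × ℝ)) : Prop :=
  ∃ k : ℕ, IsCanSqSide k σ ∧ IsCanSqSide (k + 1) q ∧ q ⊆ σ

/-- `σ` is the smallest canonical square containing `S`: it is a canonical square,
it contains `S`, and it is contained in every canonical square containing `S`. -/
def IsSmallestCanSq (S σ : Set (ℝ × ℝ)) : Prop :=
  IsCanSq σ ∧ S ⊆ σ ∧ ∀ τ : Set (ℝ × ℝ), IsCanSq τ → S ⊆ τ → σ ⊆ τ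

open scoped Classical

/-- `smallestCanSq S`: the smallest canonical square containing `S` (junk value `∅` if none exists). -/
noncomputable def smallestCanSq (S : Set (ℝ × ℝ)) : Set (ℝ × ℝ) :=
  if h : ∃ σ : Set (ℝ × ℝ), IsSmallestCanSq S σ then h.choose else ∅

/-- A canonical square `σ` is critical for `P` if at least two of its four
quadrants contain a point of `P`. -/
def Critical (P σ : Set (ℝ × ℝ)) : Prop :=
  IsCanSq σ ∧ ∃ q₁ q₂ : Set (ℝ × ℝ), IsQuadrantOf q₁ σ ∧ IsQuadrantOf q₂ σ ∧
    q₁ ≠ q₂ ∧ (P ∩ q₁).Nonempty ∧ (P ∩ q₂).Nonempty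

/-- The tiles of the compressed quadtree map `QT(P)`: (i) `U` itself if `|P| ≤ 1`;
(ii) the annulus `U \ sq(P)` if `|P| ≥ 2` and `sq(P) ≠ U`; (iii) for every
canonical square `σ` critical for `P` and every quadrant `q` of `σ`: the square
`q` if `|P ∩ q| ≤ 1`, and the annulus `q \ sq(P ∩ q)` if `|P ∩ q| ≥ 2` and
`sq(P ∩ q) ≠ q`. -/
noncomputable def QT (P : Set (ℝ × ℝ)) : Set (Set (ℝ × ℝ)) :=
  {f | (P.ncard ≤ 1 ∧ f = unitSq)
    ∨ (2 ≤ P.ncard ∧ smallestCanSq P ≠ unitSq ∧ f = unitSq \ smallestCanSq P)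
    ∨ (∃ σ q : Set (ℝ × ℝ), Critical P σ ∧ IsQuadrantOf q σ ∧
        (((P ∩ q).ncard ≤ 1 ∧ f = q)
          ∨ (2 ≤ (P ∩ q).ncard ∧ smallestCanSq (P ∩ q) ≠ q ∧ f = q \ smallestCanSq (P ∩ q))))}

/-! A tile of `QT(T)` is carved out of a *cell* `ρ` (the unit square or a quadrant of a critical
square): it is `ρ` itself, or the annulus `ρ \ sq(T ∩ ρ)`. Either way `ρ` is the smallest canonical
square containing the tile, because a canonical square containing an annulus `ρ \ τ` must contain
one of the two rows of quadrants of `ρ` that miss `τ`, and is therefore at least as large as `ρ`.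
Hence a common tile of `QT(X)` and `QT(P)` comes from the same cell `ρ` for both; the cell survives
from `X` to `S` because criticality is monotone, and the tile survives because
`sq(X ∩ ρ) ⊆ sq(S ∩ ρ) ⊆ sq(P ∩ ρ)` while the two ends agree. -/

open Set

def dyadicIco (k : ℕ) (i : ℤ) : Set ℝ := Ico ((i : ℝ) / 2 ^ k) (((i : ℝ) + 1) / 2 ^ k)

lemma canSq_eq_prod (k : ℕ) (i j : ℤ) : canSq k i j = dyadicIco k i ×ˢ dyadicIco k j := rfl

lemma mem_dyadicIco_iff {k : ℕ} {i : ℤ} {x : ℝ} : x ∈ dyadicIco k i ↔ ⌊x * 2 ^ k⌋ = i := by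
  rw [Int.floor_eq_iff, dyadicIco, mem_Ico, div_le_iff₀ (by positivity),
    lt_div_iff₀ (by positivity)]

lemma dyadicIco_nonempty (k : ℕ) (i : ℤ) : (dyadicIco k i).Nonempty :=
  ⟨i / 2 ^ k, by rw [mem_dyadicIco_iff, div_mul_cancel₀ _ (by positivity), Int.floor_intCast]⟩

lemma floor_mul_two_pow_add_ediv (x : ℝ) (k t : ℕ) :
    ⌊x * 2 ^ (k + t)⌋ / 2 ^ t = ⌊x * 2 ^ k⌋ := by
  have h := Int.floor_div_natCast (x * 2 ^ (k + t)) (2 ^ t)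
  push_cast at h
  rw [pow_add, ← mul_assoc] at h ⊢
  rwa [mul_div_cancel_right₀ _ (by positivity), eq_comm] at h

lemma dyadicIco_subset_ediv (k t : ℕ) (i : ℤ) : dyadicIco (k + t) i ⊆ dyadicIco k (i / 2 ^ t) := by
  intro x hx
  rw [mem_dyadicIco_iff] at hx ⊢
  rw [← hx, floor_mul_two_pow_add_ediv]

lemma dyadicIco_subset_of_mem {k m : ℕ} {i a : ℤ} {x : ℝ} (hkm : k ≤ m)
    (hx : x ∈ dyadicIco k i) (hx' : x ∈ dyadicIco m a) : dyadicIco m a ⊆ dyadicIco k i := by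
  obtain ⟨t, rfl⟩ := Nat.exists_eq_add_of_le hkm
  rw [mem_dyadicIco_iff] at hx hx'
  rw [← hx, ← floor_mul_two_pow_add_ediv x k t, hx']
  exact dyadicIco_subset_ediv k t a

lemma le_of_dyadicIco_subset {k m : ℕ} {i a : ℤ} (h : dyadicIco m a ⊆ dyadicIco k i) : k ≤ m := by
  rw [dyadicIco, dyadicIco, Ico_subset_Ico_iff (by gcongr; linarith)] at h
  have hlen : (1 : ℝ) / 2 ^ m ≤ 1 / 2 ^ k :=
    calc (1 : ℝ) / 2 ^ m = (a + 1) / 2 ^ m - a / 2 ^ m := by ring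
      _ ≤ (i + 1) / 2 ^ k - i / 2 ^ k := by linarith [h.1, h.2]
      _ = 1 / 2 ^ k := by ring
  rw [one_div_le_one_div (by positivity) (by positivity)] at hlen
  exact (pow_le_pow_iff_right₀ one_lt_two).1 hlen

lemma mem_canSq_iff {k : ℕ} {i j : ℤ} {p : ℝ × ℝ} :
    p ∈ canSq k i j ↔ ⌊p.1 * 2 ^ k⌋ = i ∧ ⌊p.2 * 2 ^ k⌋ = j := by
  rw [canSq_eq_prod, mem_prod, mem_dyadicIco_iff, mem_dyadicIco_iff]

lemma canSq_nonempty (k : ℕ) (i j : ℤ) : (canSq k i j).Nonempty :=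
  (dyadicIco_nonempty k i).prod (dyadicIco_nonempty k j)

lemma canSq_subset_of_mem {k m : ℕ} {i j a b : ℤ} {p : ℝ × ℝ} (hkm : k ≤ m)
    (hp : p ∈ canSq k i j) (hp' : p ∈ canSq m a b) : canSq m a b ⊆ canSq k i j :=
  prod_mono (dyadicIco_subset_of_mem hkm hp.1 hp'.1) (dyadicIco_subset_of_mem hkm hp.2 hp'.2)

lemma le_of_prod_subset_canSq {k l : ℕ} {i u v : ℤ} {t : Set ℝ} (ht : t.Nonempty)
    (h : dyadicIco k i ×ˢ t ⊆ canSq l u v) : l ≤ k := by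
  rw [canSq_eq_prod, prod_subset_prod_iff] at h
  rcases h with ⟨h, -⟩ | h | h
  · exact le_of_dyadicIco_subset h
  · exact absurd h (dyadicIco_nonempty k i).ne_empty
  · exact absurd h ht.ne_empty

lemma le_of_canSq_subset {k m : ℕ} {i j a b : ℤ} (h : canSq m a b ⊆ canSq k i j) : k ≤ m :=
  le_of_prod_subset_canSq (dyadicIco_nonempty m b) h

lemma canSq_subset_of_diff_subset {k m l : ℕ} {i j a b u v : ℤ}
    (hsub : canSq m a b ⊆ canSq k i j) (hne : canSq m a b ≠ canSq k i j)
    (h : canSq k i j \ canSq m a b ⊆ canSq l u v) : canSq k i j ⊆ canSq l u v := by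
  obtain ⟨p, hp⟩ := canSq_nonempty m a b
  have hkm : k + 1 ≤ m := by
    rcases (le_of_canSq_subset hsub).eq_or_lt with rfl | hlt
    · exact absurd (hsub.antisymm (canSq_subset_of_mem le_rfl hp (hsub hp))) hne
    · exact hlt
  obtain ⟨t, rfl⟩ := Nat.exists_eq_add_of_le hkm
  -- `canSq (k + 1 + t) a b` lies in the row `b / 2 ^ t` of quadrants of `canSq k i j`
  obtain ⟨g, hg0, hg1, hgb⟩ : ∃ g : ℤ, 0 ≤ g ∧ g ≤ 1 ∧ 2 * j + g ≠ b / 2 ^ t := by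
    by_cases hb : 2 * j = b / 2 ^ t
    exacts [⟨1, zero_le_one, le_rfl, by omega⟩, ⟨0, le_rfl, zero_le_one, by omega⟩]
  have hrow : dyadicIco k i ×ˢ dyadicIco (k + 1) (2 * j + g) ⊆
      canSq k i j \ canSq (k + 1 + t) a b := by
    rintro q ⟨hq1, hq2⟩
    refine ⟨⟨hq1, ?_⟩, fun hq => hgb ?_⟩
    · have hq := dyadicIco_subset_ediv k 1 _ hq2
      rwa [pow_one, show (2 * j + g) / 2 = j by omega] at hq
    · rw [← mem_dyadicIco_iff.1 hq2, ← mem_dyadicIco_iff.1 (dyadicIco_subset_ediv _ t b hq.2)]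
  have hlk : l ≤ k := le_of_prod_subset_canSq (dyadicIco_nonempty _ _) (hrow.trans h)
  obtain ⟨q, hq⟩ := (dyadicIco_nonempty k i).prod (dyadicIco_nonempty (k + 1) (2 * j + g))
  exact canSq_subset_of_mem hlk (h (hrow hq)) (hrow hq).1

lemma IsCanSq.subset_of_diff_subset {ρ τ σ : Set (ℝ × ℝ)} (hρ : IsCanSq ρ) (hτ : IsCanSq τ)
    (hσ : IsCanSq σ) (hτρ : τ ⊆ ρ) (hne : τ ≠ ρ) (h : ρ \ τ ⊆ σ) : ρ ⊆ σ := by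
  obtain ⟨_, _, _, -, -, -, -, rfl⟩ := hρ
  obtain ⟨_, _, _, -, -, -, -, rfl⟩ := hτ
  obtain ⟨_, _, _, -, -, -, -, rfl⟩ := hσ
  exact canSq_subset_of_diff_subset hτρ hne h

lemma IsCanSq.isSmallestCanSq_self {ρ : Set (ℝ × ℝ)} (hρ : IsCanSq ρ) : IsSmallestCanSq ρ ρ :=
  ⟨hρ, subset_rfl, fun _ _ h => h⟩

lemma IsCanSq.isSmallestCanSq_diff {ρ τ : Set (ℝ × ℝ)} (hρ : IsCanSq ρ) (hτ : IsCanSq τ)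
    (hτρ : τ ⊆ ρ) (hne : τ ≠ ρ) : IsSmallestCanSq (ρ \ τ) ρ :=
  ⟨hρ, sdiff_subset, fun _ hσ h => hρ.subset_of_diff_subset hτ hσ hτρ hne h⟩

lemma IsSmallestCanSq.unique {T σ σ' : Set (ℝ × ℝ)} (h : IsSmallestCanSq T σ)
    (h' : IsSmallestCanSq T σ') : σ = σ' :=
  (h.2.2 _ h'.1 h'.2.1).antisymm (h'.2.2 _ h.1 h.2.1)

lemma unitSq_eq_canSq : unitSq = canSq 0 0 0 := by
  simp [unitSq, canSq]

lemma isCanSqSide_unitSq : IsCanSqSide 0 unitSq :=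
  ⟨0, 0, le_rfl, by norm_num, le_rfl, by norm_num, unitSq_eq_canSq⟩

lemma IsCanSq.subset_unitSq {σ : Set (ℝ × ℝ)} (h : IsCanSq σ) : σ ⊆ unitSq := by
  obtain ⟨k, i, j, hi0, hi, hj0, hj, rfl⟩ := h
  have hsub : ∀ {i : ℤ}, 0 ≤ i → i < 2 ^ k → dyadicIco k i ⊆ dyadicIco 0 0 := fun {i'} h0 h1 => by
    have h := dyadicIco_subset_ediv 0 k i'
    rwa [zero_add, Int.ediv_eq_zero_of_lt h0 h1] at h
  rw [unitSq_eq_canSq, canSq_eq_prod, canSq_eq_prod]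
  exact prod_mono (hsub hi0 hi) (hsub hj0 hj)

noncomputable def sqAt (k : ℕ) (p : ℝ × ℝ) : Set (ℝ × ℝ) :=
  canSq k ⌊p.1 * 2 ^ k⌋ ⌊p.2 * 2 ^ k⌋

lemma mem_sqAt_self (k : ℕ) (p : ℝ × ℝ) : p ∈ sqAt k p :=
  mem_canSq_iff.2 ⟨rfl, rfl⟩

lemma IsCanSqSide.eq_sqAt {k : ℕ} {σ : Set (ℝ × ℝ)} {p : ℝ × ℝ} (h : IsCanSqSide k σ)
    (hp : p ∈ σ) : σ = sqAt k p := by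
  obtain ⟨i, j, -, -, -, -, rfl⟩ := h
  obtain ⟨rfl, rfl⟩ := mem_canSq_iff.1 hp
  rfl

lemma isCanSqSide_sqAt {p : ℝ × ℝ} (hp : p ∈ unitSq) (k : ℕ) : IsCanSqSide k (sqAt k p) := by
  obtain ⟨⟨h1, h2⟩, h3, h4⟩ := hp
  refine ⟨_, _, ?_, ?_, ?_, ?_, rfl⟩
  · exact Int.floor_nonneg.2 (by positivity)
  · rw [Int.floor_lt]; push_cast; nlinarith [pow_pos (two_pos (α := ℝ)) k]
  · exact Int.floor_nonneg.2 (by positivity)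
  · rw [Int.floor_lt]; push_cast; nlinarith [pow_pos (two_pos (α := ℝ)) k]

lemma sqAt_anti {k m : ℕ} (h : k ≤ m) (p : ℝ × ℝ) : sqAt m p ⊆ sqAt k p :=
  canSq_subset_of_mem h (mem_sqAt_self k p) (mem_sqAt_self m p)

lemma exists_floor_mul_two_pow_ne {x y : ℝ} (h : x ≠ y) : ∃ n : ℕ, ⌊x * 2 ^ n⌋ ≠ ⌊y * 2 ^ n⌋ := by
  have hpos : 0 < |x - y| := abs_pos.2 (sub_ne_zero.2 h)
  obtain ⟨n, hn⟩ := pow_unbounded_of_one_lt (1 / |x - y|) (one_lt_two (α := ℝ))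
  refine ⟨n, fun heq => ?_⟩
  have hlt := Int.abs_sub_lt_one_of_floor_eq_floor heq
  rw [← sub_mul, abs_mul, abs_of_pos (by positivity : (0 : ℝ) < 2 ^ n)] at hlt
  rw [div_lt_iff₀ hpos] at hn
  linarith

lemma exists_not_mem_sqAt {p q : ℝ × ℝ} (h : q ≠ p) : ∃ n, q ∉ sqAt n p := by
  rcases ne_or_eq q.1 p.1 with h1 | h1
  · obtain ⟨n, hn⟩ := exists_floor_mul_two_pow_ne h1
    exact ⟨n, fun hq => hn (mem_canSq_iff.1 hq).1⟩
  · obtain ⟨n, hn⟩ := exists_floor_mul_two_pow_ne fun h2 => h (Prod.ext h1 h2)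
    exact ⟨n, fun hq => hn (mem_canSq_iff.1 hq).2⟩

lemma exists_isSmallestCanSq {T : Set (ℝ × ℝ)} (hU : T ⊆ unitSq) (hT : T.Nontrivial) :
    ∃ σ, IsSmallestCanSq T σ := by
  obtain ⟨a, ha, b, hb, hba⟩ := hT
  have hex : ∃ n, ¬ T ⊆ sqAt n a := by
    obtain ⟨n, hn⟩ := exists_not_mem_sqAt hba.symm
    exact ⟨n, fun hT => hn (hT hb)⟩
  set n := Nat.find hex with hn
  have hn0 : n ≠ 0 := by
    intro h0
    apply Nat.find_spec hex
    rw [← hn, h0, ← isCanSqSide_unitSq.eq_sqAt (hU ha)]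
    exact hU
  refine ⟨sqAt (n - 1) a, ⟨n - 1, isCanSqSide_sqAt (hU ha) _⟩,
    not_not.1 (Nat.find_min hex (by omega)), ?_⟩
  rintro τ ⟨m, hτ⟩ hTτ
  obtain rfl := hτ.eq_sqAt (hTτ ha)
  have hmn : m < n := lt_of_not_ge fun h => Nat.find_spec hex (hTτ.trans (sqAt_anti h a))
  exact sqAt_anti (by omega) a

lemma isSmallestCanSq_smallestCanSq {T : Set (ℝ × ℝ)} (hU : T ⊆ unitSq) (hT : T.Nontrivial) :
    IsSmallestCanSq T (smallestCanSq T) := by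
  have hex := exists_isSmallestCanSq hU hT
  rw [smallestCanSq, dif_pos hex]
  exact hex.choose_spec

lemma smallestCanSq_mono {S T : Set (ℝ × ℝ)} (hST : S ⊆ T) (hU : T ⊆ unitSq)
    (hS : S.Nontrivial) : smallestCanSq S ⊆ smallestCanSq T :=
  have hT := isSmallestCanSq_smallestCanSq hU (hS.mono hST)
  (isSmallestCanSq_smallestCanSq (hST.trans hU) hS).2.2 _ hT.1 (hST.trans hT.2.1)

lemma Critical.mono {X S σ : Set (ℝ × ℝ)} (h : Critical X σ) (hXS : X ⊆ S) : Critical S σ := by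
  obtain ⟨hσ, q₁, q₂, h₁, h₂, hne, hX₁, hX₂⟩ := h
  exact ⟨hσ, q₁, q₂, h₁, h₂, hne, hX₁.mono (inter_subset_inter_left _ hXS),
    hX₂.mono (inter_subset_inter_left _ hXS)⟩

def IsQTCell (T ρ : Set (ℝ × ℝ)) : Prop :=
  ρ = unitSq ∨ ∃ σ, Critical T σ ∧ IsQuadrantOf ρ σ

def IsCellTile (T ρ f : Set (ℝ × ℝ)) : Prop :=
  ((T ∩ ρ).ncard ≤ 1 ∧ f = ρ) ∨
    (2 ≤ (T ∩ ρ).ncard ∧ smallestCanSq (T ∩ ρ) ≠ ρ ∧ f = ρ \ smallestCanSq (T ∩ ρ))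

lemma mem_QT_iff {T f : Set (ℝ × ℝ)} (hT : T ⊆ unitSq) :
    f ∈ QT T ↔ ∃ ρ, IsQTCell T ρ ∧ IsCellTile T ρ f := by
  have hTU : T ∩ unitSq = T := inter_eq_left.2 hT
  constructor
  · rintro (hf | hf | ⟨σ, q, hσ, hq, hf⟩)
    · exact ⟨unitSq, Or.inl rfl, Or.inl (by rwa [hTU])⟩
    · exact ⟨unitSq, Or.inl rfl, Or.inr (by rwa [hTU])⟩
    · exact ⟨q, Or.inr ⟨σ, hσ, hq⟩, hf⟩
  · rintro ⟨ρ, rfl | ⟨σ, hσ, hq⟩, hf | hf⟩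
    · exact Or.inl (by rwa [hTU] at hf)
    · exact Or.inr (Or.inl (by rwa [hTU] at hf))
    · exact Or.inr (Or.inr ⟨σ, ρ, hσ, hq, Or.inl hf⟩)
    · exact Or.inr (Or.inr ⟨σ, ρ, hσ, hq, Or.inr hf⟩)

lemma IsQTCell.isCanSq {T ρ : Set (ℝ × ℝ)} (h : IsQTCell T ρ) : IsCanSq ρ := by
  rcases h with rfl | ⟨σ, -, k, -, hρ, -⟩
  exacts [⟨0, isCanSqSide_unitSq⟩, ⟨k + 1, hρ⟩]

lemma IsQTCell.mono {X S ρ : Set (ℝ × ℝ)} (h : IsQTCell X ρ) (hXS : X ⊆ S) : IsQTCell S ρ :=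
  h.imp_right fun ⟨σ, hσ, hρ⟩ => ⟨σ, hσ.mono hXS, hρ⟩

lemma IsCanSq.isSmallestCanSq_inter {T ρ : Set (ℝ × ℝ)} (hρ : IsCanSq ρ)
    (hT : 2 ≤ (T ∩ ρ).ncard) : IsSmallestCanSq (T ∩ ρ) (smallestCanSq (T ∩ ρ)) :=
  isSmallestCanSq_smallestCanSq (inter_subset_right.trans hρ.subset_unitSq)
    (one_lt_ncard_iff_nontrivial_and_finite.1 hT).1

lemma IsCanSq.smallestCanSq_inter_subset {T ρ : Set (ℝ × ℝ)} (hρ : IsCanSq ρ)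
    (hT : 2 ≤ (T ∩ ρ).ncard) : smallestCanSq (T ∩ ρ) ⊆ ρ :=
  (hρ.isSmallestCanSq_inter hT).2.2 ρ hρ inter_subset_right

lemma IsCellTile.isSmallestCanSq {T ρ f : Set (ℝ × ℝ)} (hρ : IsCanSq ρ) (h : IsCellTile T ρ f) :
    IsSmallestCanSq f ρ := by
  rcases h with ⟨-, rfl⟩ | ⟨h2, hne, rfl⟩
  · exact hρ.isSmallestCanSq_self
  · exact hρ.isSmallestCanSq_diff (hρ.isSmallestCanSq_inter h2).1
      (hρ.smallestCanSq_inter_subset h2) hne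

lemma IsCellTile.of_subset_of_subset {X S P ρ f : Set (ℝ × ℝ)} (hXS : X ⊆ S) (hSP : S ⊆ P)
    (hP : P.Finite) (hρ : IsCanSq ρ) (hXf : IsCellTile X ρ f) (hPf : IsCellTile P ρ f) :
    IsCellTile S ρ f := by
  have hXSρ : X ∩ ρ ⊆ S ∩ ρ := inter_subset_inter_left ρ hXS
  have hSPρ : S ∩ ρ ⊆ P ∩ ρ := inter_subset_inter_left ρ hSP
  rcases hPf with ⟨hP1, hf⟩ | ⟨hP2, hPne, hf⟩
  · exact Or.inl ⟨(ncard_le_ncard hSPρ (hP.inter_of_left ρ)).trans hP1, hf⟩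
  subst hf
  have hPsub := hρ.smallestCanSq_inter_subset hP2
  rcases hXf with ⟨-, hXeq⟩ | ⟨hX2, -, hXeq⟩
  · have hempty := disjoint_self.1 ((sdiff_eq_left.1 hXeq).mono_left hPsub)
    exact absurd hempty ((one_lt_ncard_iff_nontrivial_and_finite.1 hP2).1.nonempty.mono
      (hρ.isSmallestCanSq_inter hP2).2.1).ne_empty
  have hXP : smallestCanSq (X ∩ ρ) = smallestCanSq (P ∩ ρ) := by
    rw [← sdiff_sdiff_cancel_left (hρ.smallestCanSq_inter_subset hX2), ← hXeq,
      sdiff_sdiff_cancel_left hPsub]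
  have hXnt : (X ∩ ρ).Nontrivial := (one_lt_ncard_iff_nontrivial_and_finite.1 hX2).1
  have hPU : P ∩ ρ ⊆ unitSq := inter_subset_right.trans hρ.subset_unitSq
  have hSsq : smallestCanSq (S ∩ ρ) = smallestCanSq (P ∩ ρ) :=
    (smallestCanSq_mono hSPρ hPU (hXnt.mono hXSρ)).antisymm
      (hXP ▸ smallestCanSq_mono hXSρ (hSPρ.trans hPU) hXnt)
  refine Or.inr ⟨hX2.trans (ncard_le_ncard hXSρ ((hP.inter_of_left ρ).subset hSPρ)), ?_, ?_⟩
  · rwa [hSsq]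
  · rw [hSsq]

/-- Sandwich property of tiles: if `X ⊆ S ⊆ P ⊆ U` are finite and `f` is a tile
of both `QT(X)` and `QT(P)`, then `f` is a tile of `QT(S)`. -/
theorem QT_sandwich (X S P : Set (ℝ × ℝ)) (hPfin : P.Finite) (hPU : P ⊆ unitSq)
    (hXS : X ⊆ S) (hSP : S ⊆ P) (f : Set (ℝ × ℝ))
    (hfX : f ∈ QT X) (hfP : f ∈ QT P) :
    f ∈ QT S := by
  obtain ⟨ρ, hρX, hXf⟩ := (mem_QT_iff ((hXS.trans hSP).trans hPU)).1 hfX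
  obtain ⟨ρ', hρP, hPf⟩ := (mem_QT_iff hPU).1 hfP
  obtain rfl : ρ = ρ' :=
    (hXf.isSmallestCanSq hρX.isCanSq).unique (hPf.isSmallestCanSq hρP.isCanSq)
  exact (mem_QT_iff (hSP.trans hPU)).2
    ⟨ρ, hρX.mono hXS, hXf.of_subset_of_subset hXS hSP hPfin hρX.isCanSq hPf⟩
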